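/- arXiv:1407.4165 — 5 statements merged into one kernel-verified Lean document; each statement's English description precedes it below -/
import Mathlib

section
/- Let E be a finite-dimensional real inner product space and R an algebraic curvature tensor on E with signed sectional curvatures. Then for any two orthonormal vectors v, w ∈ E, one has R(w,v)v = 0 (i.e., w lies in the kernel of the Jacobi operator J_v) if and only if the sectional curvature of the plane spanned by v and w vanishes, i.e., R(v,w,w,v) = 0. -/
open scoped RealInnerProductSpace

/-- An algebraic curvature tensor on a real inner product space `E`: a multilinear map
`R : E × E × E × E → ℝ` with the symmetries of the Riemann curvature tensor.
For vectors `x y z`, the value `R x y z ·` represents the linear functional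
`w ↦ ⟨R(x,y)z, w⟩` determined by the curvature operator `R(x,y)z`. -/
structure AlgCurvTensor (E : Type*) [NormedAddCommGroup E] [InnerProductSpace ℝ E] where
  R : E →ₗ[ℝ] E →ₗ[ℝ] E →ₗ[ℝ] E →ₗ[ℝ] ℝ
  antisym_fst : ∀ x y z w : E, R x y z w = - R y x z w
  antisym_snd : ∀ x y z w : E, R x y z w = - R x y w z
  pair_symm : ∀ x y z w : E, R x y z w = R z w x y
  bianchi : ∀ x y z w : E, R x y z w + R y z x w + R z x y w = 0

/-- `T` has signed sectional curvatures: either all sectional curvatures are `≥ 0`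
or all are `≤ 0`. -/
def AlgCurvTensor.SignedSec {E : Type*} [NormedAddCommGroup E] [InnerProductSpace ℝ E]
    (T : AlgCurvTensor E) : Prop :=
  (∀ x y : E, ‖x‖ = 1 → ‖y‖ = 1 → ⟪x, y⟫ = 0 → 0 ≤ T.R x y y x) ∨
  (∀ x y : E, ‖x‖ = 1 → ‖y‖ = 1 → ⟪x, y⟫ = 0 → T.R x y y x ≤ 0)

/-! For fixed `v`, the form `J_v(x, y) = R(x, v, v, y)` is symmetric, vanishes on `v`,
and on `v^⊥` its diagonal values are sectional curvatures up to positive factors; so signed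
sectional curvature makes `±J_v` positive semidefinite on all of `E`. By Cauchy–Schwarz for
semidefinite forms, `J_v(w, w) = sec(v ∧ w) = 0` forces `J_v(w, ·) = 0`, i.e. `R(w, v)v = 0`. -/

namespace AlgCurvTensor

variable {E : Type*} [NormedAddCommGroup E] [InnerProductSpace ℝ E] (T : AlgCurvTensor E)

-- `(-1 : ℝ) • T.R` because instance search does not find `Neg` on the iterated linear maps.
instance : Neg (AlgCurvTensor E) where
  neg T :=
    { R := (-1 : ℝ) • T.R
      antisym_fst := fun x y z w => by simp [T.antisym_fst x y z w]
      antisym_snd := fun x y z w => by simp [T.antisym_snd x y z w]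
      pair_symm := fun x y z w => by simp [T.pair_symm x y z w]
      bianchi := fun x y z w => by
        simp only [LinearMap.smul_apply, smul_eq_mul]
        linarith [T.bianchi x y z w] }

@[simp]
theorem neg_R_apply (x y z w : E) : (-T).R x y z w = -T.R x y z w := by
  change ((-1 : ℝ) • T.R) x y z w = _
  simp

def SecNonneg : Prop :=
  ∀ x y : E, ‖x‖ = 1 → ‖y‖ = 1 → ⟪x, y⟫ = 0 → 0 ≤ T.R x y y x

theorem signedSec_iff : T.SignedSec ↔ T.SecNonneg ∨ (-T).SecNonneg := by
  simp only [SignedSec, SecNonneg, neg_R_apply, neg_nonneg]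

theorem R_smul_smul (a b : ℝ) (x y : E) :
    T.R (a • x) (b • y) (b • y) (a • x) = (a * b) ^ 2 * T.R x y y x := by
  simp only [map_smul, LinearMap.smul_apply, smul_eq_mul]
  ring

theorem SecNonneg.R_nonneg {T : AlgCurvTensor E} (hT : T.SecNonneg) {x y : E} (hxy : ⟪x, y⟫ = 0) :
    0 ≤ T.R x y y x := by
  rcases eq_or_ne x 0 with rfl | hx
  · simp
  rcases eq_or_ne y 0 with rfl | hy
  · simp
  have hunit := hT _ _ (norm_smul_inv_norm hx) (norm_smul_inv_norm hy)
    (by rw [real_inner_smul_left, real_inner_smul_right, hxy, mul_zero, mul_zero])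
  rw [R_smul_smul] at hunit
  exact nonneg_of_mul_nonneg_right hunit (by positivity)

def jacobiForm (v : E) : LinearMap.BilinForm ℝ E := (T.R.flip v).flip v

@[simp]
theorem jacobiForm_apply (v x y : E) : T.jacobiForm v x y = T.R x v v y := rfl

theorem jacobiForm_isSymm (v : E) : LinearMap.IsSymm (T.jacobiForm v) := by
  refine LinearMap.isSymm_def.2 fun x y => ?_
  simp only [jacobiForm_apply, RingHom.id_apply]
  rw [T.pair_symm, T.antisym_fst, T.antisym_snd, neg_neg]

theorem jacobiForm_self_left (v y : E) : T.jacobiForm v v y = 0 := by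
  have := T.antisym_fst v v v y
  simp only [jacobiForm_apply]
  linarith

theorem jacobiForm_self_right (v x : E) : T.jacobiForm v x v = 0 := by
  rw [← (T.jacobiForm_isSymm v).eq, RingHom.id_apply, jacobiForm_self_left]

/-- `⟪v, v⟫ • x - ⟪v, x⟫ • v` is orthogonal to `v`, and `J_v` does not see the `v`-component. -/
theorem SecNonneg.jacobiForm_nonneg {T : AlgCurvTensor E} (hT : T.SecNonneg) (v x : E) :
    0 ≤ T.jacobiForm v x x := by
  rcases eq_or_ne v 0 with rfl | hv
  · simp
  set x' := ⟪v, v⟫ • x - ⟪v, x⟫ • v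
  have hx'v : ⟪x', v⟫ = 0 := by
    simp only [x', inner_sub_left, real_inner_smul_left, real_inner_comm x v]
    ring
  have hx' : T.jacobiForm v x' x' = ⟪v, v⟫ ^ 2 * T.jacobiForm v x x := by
    simp only [x', map_sub, map_smul, LinearMap.sub_apply, LinearMap.smul_apply, smul_eq_mul,
      jacobiForm_self_left, jacobiForm_self_right]
    ring
  have hvv : 0 < ⟪v, v⟫ ^ 2 := by
    have := real_inner_self_pos.2 hv
    positivity
  exact nonneg_of_mul_nonneg_right (hx' ▸ hT.R_nonneg hx'v) hvv

theorem SecNonneg.jacobi_eq_zero_of_sec_eq_zero {T : AlgCurvTensor E} (hT : T.SecNonneg) {v w : E}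
    (hvw : T.R w v v w = 0) (u : E) : T.R w v v u = 0 := by
  have hCS := LinearMap.BilinForm.apply_sq_le_of_symm (T.jacobiForm v) (hT.jacobiForm_nonneg v)
    (T.jacobiForm_isSymm v) w u
  simp only [jacobiForm_apply, hvw, zero_mul] at hCS
  exact (sq_nonpos_iff _).1 hCS

end AlgCurvTensor

theorem jacobi_kernel_iff_sec_zero_general {E : Type*} [NormedAddCommGroup E]
    [InnerProductSpace ℝ E]
    (T : AlgCurvTensor E) (hsigned : T.SignedSec)
    (v w : E) :
    (∀ u : E, T.R w v v u = 0) ↔ T.R v w w v = 0 := by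
  rw [T.pair_symm v w w v]
  refine ⟨fun h => h w, fun hsec u => ?_⟩
  rcases T.signedSec_iff.1 hsigned with hT | hT
  · exact hT.jacobi_eq_zero_of_sec_eq_zero hsec u
  · simpa using hT.jacobi_eq_zero_of_sec_eq_zero (by simpa using hsec) u

/-- For an algebraic curvature tensor with signed sectional curvatures and orthonormal
vectors `v, w`, the curvature operator `R(w,v)v` vanishes (i.e., `w ∈ ker J_v`, expressed
by the vanishing of all inner products `⟨R(w,v)v, u⟩ = R w v v u`) if and only if
the sectional curvature `sec(v ∧ w) = R v w w v` vanishes. -/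
theorem jacobi_kernel_iff_sec_zero {E : Type*} [NormedAddCommGroup E]
    [InnerProductSpace ℝ E] [FiniteDimensional ℝ E]
    (T : AlgCurvTensor E) (hsigned : T.SignedSec)
    (v w : E) (hv : ‖v‖ = 1) (hw : ‖w‖ = 1) (hvw : ⟪v, w⟫ = 0) :
    (∀ u : E, T.R w v v u = 0) ↔ T.R v w w v = 0 :=
  jacobi_kernel_iff_sec_zero_general T hsigned v w
end

section
/- Let D be a totally geodesic tangent distribution on the unit sphere of a 3-dimensional real inner product space E, with dim D_v ≥ 1 for every unit vector v. If there exist two linearly independent unit vectors v₁ and v₂ with D_{v₁} = v₁^⊥ and D_{v₂} = v₂^⊥ (i.e., dim D_{v₁} = dim D_{v₂} = 2), then D_v = v^⊥ for every unit vector v ∈ E. -/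
open scoped RealInnerProductSpace

/-! If `D a = a^⊥`, then for every unit `u ≠ ±a` the great circle from `a` through `u` starts
tangent to `D`, so its velocity at `u`, a positive multiple of `⟪a, u⟫ u - a`, lies in `D u`.
Two full points `a, b` with `u ∉ span {a, b}` thus give two independent vectors of `D u ≤ u^⊥`,
and `D u = u^⊥` by dimension count. This settles every `u` off the plane `P = span {v₁, v₂}`.
For `u ∈ P`, take a unit normal `n` of `P` and a unit `w ∈ P` orthogonal to `u`: the points `n`
and `(n + w) / ‖n + w‖` lie off `P`, hence are full, and they span a plane orthogonal to `u`. -/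

/-- A tangent distribution `D` on the unit sphere of `E` (assigning to each unit vector `v`
a subspace `D v ≤ v^⊥`) is totally geodesic if the velocity field of every great circle
with initial position `v` and initial velocity a unit vector `w ∈ D v` remains in `D`. -/
def TotallyGeodesicDistribution {E : Type*} [NormedAddCommGroup E] [InnerProductSpace ℝ E]
    (D : E → Submodule ℝ E) : Prop :=
  ∀ v w : E, ‖v‖ = 1 → ‖w‖ = 1 → w ∈ D v → ∀ t : ℝ,
    (-(Real.sin t) • v + Real.cos t • w) ∈ D (Real.cos t • v + Real.sin t • w)

section

variable {E : Type*} [NormedAddCommGroup E] [InnerProductSpace ℝ E]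

lemma norm_sub_inner_smul_sq_of_norm_eq_one {v u : E} (hv : ‖v‖ = 1) (hu : ‖u‖ = 1) :
    ‖u - ⟪v, u⟫ • v‖ ^ 2 = 1 - ⟪v, u⟫ ^ 2 := by
  rw [norm_sub_sq_real, inner_smul_right, norm_smul, hu, hv, real_inner_comm,
    Real.norm_eq_abs, mul_one, sq_abs]
  ring

lemma TotallyGeodesicDistribution.inner_smul_sub_mem {D : E → Submodule ℝ E}
    (htg : TotallyGeodesicDistribution D) {v u : E} (hv : ‖v‖ = 1) (hu : ‖u‖ = 1)
    (hDv : (ℝ ∙ v)ᗮ ≤ D v) (huv : u ∉ ℝ ∙ v) : ⟪v, u⟫ • u - v ∈ D u := by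
  set c := ⟪v, u⟫
  have hne : u - c • v ≠ 0 := fun h =>
    huv (Submodule.mem_span_singleton.mpr ⟨c, (sub_eq_zero.mp h).symm⟩)
  set s := ‖u - c • v‖
  have hs : 0 < s := norm_pos_iff.mpr hne
  have hs2 : s ^ 2 = 1 - c ^ 2 := norm_sub_inner_smul_sq_of_norm_eq_one hv hu
  -- `w` is the unit tangent at `v` of the great circle from `v` to `u`, reached at time `arccos c`
  set w := s⁻¹ • (u - c • v)
  have hw : ‖w‖ = 1 := norm_smul_inv_norm hne
  have hwD : w ∈ D v := hDv <| Submodule.mem_orthogonal_singleton_iff_inner_right.mpr <| by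
    rw [inner_smul_right, inner_sub_right, inner_smul_right, real_inner_self_eq_norm_sq, hv]
    ring
  have hcos : Real.cos (Real.arccos c) = c := Real.cos_arccos (by nlinarith) (by nlinarith)
  have hsin : Real.sin (Real.arccos c) = s := by
    rw [Real.sin_arccos, ← hs2, Real.sqrt_sq hs.le]
  have hcirc := htg v w hv hw hwD (Real.arccos c)
  rw [hcos, hsin] at hcirc
  have hpos : c • v + s • w = u := by
    rw [smul_smul, mul_inv_cancel₀ hs.ne', one_smul, add_sub_cancel]
  have hvel : c • u - v = s • (-s • v + c • w) := by
    simp only [w]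
    match_scalars <;> field_simp
    linarith
  rw [hpos] at hcirc
  rw [hvel]
  exact (D u).smul_mem s hcirc

lemma Submodule.eq_orthogonal_span_singleton_of_pair_mem [FiniteDimensional ℝ E]
    (hdim : Module.finrank ℝ E = 3) {u : E} (hu : u ≠ 0) {S : Submodule ℝ E}
    (hS : S ≤ (ℝ ∙ u)ᗮ) {x y : E} (hxy : LinearIndependent ℝ ![x, y]) (hx : x ∈ S)
    (hy : y ∈ S) : S = (ℝ ∙ u)ᗮ := by
  have : Fact (Module.finrank ℝ E = 2 + 1) := ⟨hdim⟩
  refine Submodule.eq_of_le_of_finrank_le hS ?_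
  have hspan : Submodule.span ℝ (Set.range ![x, y]) ≤ S := by
    rw [Submodule.span_le, Set.range_subset_iff]
    exact Fin.forall_fin_two.mpr ⟨hx, hy⟩
  calc Module.finrank ℝ (ℝ ∙ u)ᗮ = 2 := finrank_orthogonal_span_singleton hu
    _ = Module.finrank ℝ (Submodule.span ℝ (Set.range ![x, y])) := by
      rw [finrank_span_eq_card hxy, Fintype.card_fin]
    _ ≤ Module.finrank ℝ S := Submodule.finrank_mono hspan

lemma TotallyGeodesicDistribution.eq_orthogonal_of_notMem_span_pair [FiniteDimensional ℝ E]
    (hdim : Module.finrank ℝ E = 3) {D : E → Submodule ℝ E}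
    (htg : TotallyGeodesicDistribution D) {a b u : E} (ha : ‖a‖ = 1) (hb : ‖b‖ = 1)
    (hu : ‖u‖ = 1) (hDa : (ℝ ∙ a)ᗮ ≤ D a) (hDb : (ℝ ∙ b)ᗮ ≤ D b) (hDu : D u ≤ (ℝ ∙ u)ᗮ)
    (hab : LinearIndependent ℝ ![a, b]) (hu_ab : u ∉ Submodule.span ℝ {a, b}) :
    D u = (ℝ ∙ u)ᗮ := by
  have hu_a : u ∉ ℝ ∙ a := fun h => hu_ab (Submodule.span_mono (by simp) h)
  have hu_b : u ∉ ℝ ∙ b := fun h => hu_ab (Submodule.span_mono (by simp) h)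
  refine Submodule.eq_orthogonal_span_singleton_of_pair_mem hdim (norm_ne_zero_iff.mp
    (by simp [hu])) hDu ?_ (htg.inner_smul_sub_mem ha hu hDa hu_a)
    (htg.inner_smul_sub_mem hb hu hDb hu_b)
  rw [LinearIndependent.pair_iff] at hab ⊢
  intro s t hst
  have hcomb : s • a + t • b = (s * ⟪a, u⟫ + t * ⟪b, u⟫) • u := by
    linear_combination (norm := module) -hst
  by_cases hcoef : s * ⟪a, u⟫ + t * ⟪b, u⟫ = 0
  · exact hab s t (by rw [hcomb, hcoef, zero_smul])
  · refine absurd ?_ hu_ab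
    rw [← inv_smul_smul₀ hcoef u, ← hcomb]
    exact Submodule.smul_mem _ _ (Submodule.mem_span_pair.mpr ⟨s, t, rfl⟩)

lemma Submodule.exists_mem_norm_eq_one {K : Submodule ℝ E} (hK : K ≠ ⊥) :
    ∃ x ∈ K, ‖x‖ = 1 := by
  obtain ⟨x, hxK, hx⟩ := Submodule.exists_mem_ne_zero_of_ne_bot hK
  exact ⟨‖x‖⁻¹ • x, K.smul_mem _ hxK, norm_smul_inv_norm hx⟩

lemma Submodule.exists_unit_mem_orthogonal_and_unit_mem_inner_eq_zero [FiniteDimensional ℝ E]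
    {P : Submodule ℝ E} (hP : 2 ≤ Module.finrank ℝ P) (hPtop : P ≠ ⊤) {v : E} (hv : v ≠ 0)
    (hvP : v ∈ P) : ∃ n w : E, n ∈ Pᗮ ∧ w ∈ P ∧ ‖n‖ = 1 ∧ ‖w‖ = 1 ∧ ⟪v, w⟫ = 0 := by
  obtain ⟨n, hnP, hn⟩ := Submodule.exists_mem_norm_eq_one
    (mt Submodule.orthogonal_eq_bot_iff.mp hPtop)
  have hK : (ℝ ∙ v)ᗮ ⊓ P ≠ ⊥ := by
    intro h
    have := Submodule.finrank_add_inf_finrank_orthogonal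
      ((Submodule.span_singleton_le_iff_mem v P).mpr hvP)
    rw [h, finrank_bot, finrank_span_singleton hv] at this
    omega
  obtain ⟨w, ⟨hwv, hwP⟩, hw⟩ := Submodule.exists_mem_norm_eq_one hK
  exact ⟨n, w, hnP, hwP, hn, hw, Submodule.mem_orthogonal_singleton_iff_inner_right.mp hwv⟩

lemma Submodule.notMem_span_pair_of_inner_eq_zero {v a b : E} (hv : v ≠ 0)
    (ha : ⟪v, a⟫ = 0) (hb : ⟪v, b⟫ = 0) : v ∉ Submodule.span ℝ {a, b} := fun h => by
  have hspan : Submodule.span ℝ {a, b} ≤ (ℝ ∙ v)ᗮ := by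
    rw [Submodule.span_le, Set.insert_subset_iff, Set.singleton_subset_iff]
    exact ⟨Submodule.mem_orthogonal_singleton_iff_inner_right.mpr ha,
      Submodule.mem_orthogonal_singleton_iff_inner_right.mpr hb⟩
  exact hv (inner_self_eq_zero.mp (Submodule.mem_orthogonal_singleton_iff_inner_right.mp
    (hspan h)))

lemma Submodule.exists_pair_notMem_of_mem [FiniteDimensional ℝ E] {P : Submodule ℝ E}
    (hP : 2 ≤ Module.finrank ℝ P) (hPtop : P ≠ ⊤) {v : E} (hv : v ≠ 0) (hvP : v ∈ P) :
    ∃ a b : E, ‖a‖ = 1 ∧ ‖b‖ = 1 ∧ a ∉ P ∧ b ∉ P ∧ LinearIndependent ℝ ![a, b] ∧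
      v ∉ Submodule.span ℝ {a, b} := by
  obtain ⟨n, w, hnP, hwP, hn, hw, hvw⟩ :=
    Submodule.exists_unit_mem_orthogonal_and_unit_mem_inner_eq_zero hP hPtop hv hvP
  have hvn : ⟪v, n⟫ = 0 := Submodule.inner_right_of_mem_orthogonal hvP hnP
  have hwn : ⟪w, n⟫ = 0 := Submodule.inner_right_of_mem_orthogonal hwP hnP
  have hnn : ⟪n, n⟫ = 1 := by rw [real_inner_self_eq_norm_sq, hn, one_pow]
  have hww : ⟪w, w⟫ = 1 := by rw [real_inner_self_eq_norm_sq, hw, one_pow]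
  have hnw : n + w ≠ 0 := fun h => by
    have := congr_arg (⟪n, ·⟫) h
    rw [inner_add_right, inner_zero_right, hnn, real_inner_comm, hwn] at this
    norm_num at this
  set r := ‖n + w‖⁻¹
  have hr : r ≠ 0 := inv_ne_zero (norm_ne_zero_iff.mpr hnw)
  have hnb : ⟪n, r • (n + w)⟫ = r := by
    rw [inner_smul_right, inner_add_right, hnn, real_inner_comm, hwn]; ring
  have hwb : ⟪w, r • (n + w)⟫ = r := by
    rw [inner_smul_right, inner_add_right, hww, hwn]; ring
  have hvb : ⟪v, r • (n + w)⟫ = 0 := by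
    rw [inner_smul_right, inner_add_right, hvn, hvw]; ring
  refine ⟨n, r • (n + w), hn, norm_smul_inv_norm hnw, fun h => ?_, fun h => ?_, ?_,
    Submodule.notMem_span_pair_of_inner_eq_zero hv hvn hvb⟩
  · have := Submodule.inner_right_of_mem_orthogonal h hnP
    rw [hnn] at this
    exact one_ne_zero this
  · have := Submodule.inner_right_of_mem_orthogonal h hnP
    rw [real_inner_comm, hnb] at this
    exact hr this
  · refine LinearIndependent.pair_iff.mpr fun s t hst => ?_
    have hwst := congr_arg (⟪w, ·⟫) hst
    simp only [inner_add_right, inner_smul_right, hwn, hwb, inner_zero_right, mul_zero,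
      zero_add] at hwst
    have ht : t = 0 := (mul_eq_zero.mp hwst).resolve_right hr
    rw [ht, zero_smul, add_zero] at hst
    exact ⟨(smul_eq_zero.mp hst).resolve_right (norm_ne_zero_iff.mp (by simp [hn])), ht⟩

end

theorem totally_geodesic_distribution_two_full_points_general {E : Type*} [NormedAddCommGroup E]
    [InnerProductSpace ℝ E] [FiniteDimensional ℝ E] (hdim : Module.finrank ℝ E = 3)
    (D : E → Submodule ℝ E)
    (hsub : ∀ v : E, ‖v‖ = 1 → D v ≤ (Submodule.span ℝ {v})ᗮ)
    (htg : TotallyGeodesicDistribution D)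
    (v₁ v₂ : E) (hv₁ : ‖v₁‖ = 1) (hv₂ : ‖v₂‖ = 1)
    (hind : LinearIndependent ℝ ![v₁, v₂])
    (hD₁ : D v₁ = (Submodule.span ℝ {v₁})ᗮ) (hD₂ : D v₂ = (Submodule.span ℝ {v₂})ᗮ) :
    ∀ v : E, ‖v‖ = 1 → D v = (Submodule.span ℝ {v})ᗮ := by
  have hP : Module.finrank ℝ (Submodule.span ℝ {v₁, v₂}) = 2 := by
    rw [← Matrix.range_cons_cons_empty v₁ v₂ ![]]
    exact finrank_span_eq_card hind
  set P := Submodule.span ℝ {v₁, v₂}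
  have hfull : ∀ u : E, ‖u‖ = 1 → u ∉ P → D u = (ℝ ∙ u)ᗮ := fun u hu huP =>
    htg.eq_orthogonal_of_notMem_span_pair hdim hv₁ hv₂ hu hD₁.ge hD₂.ge (hsub u hu) hind huP
  have hPtop : P ≠ ⊤ := fun h => by
    rw [h, finrank_top, hdim] at hP
    omega
  intro v hv
  by_cases hvP : v ∈ P
  · obtain ⟨a, b, ha, hb, haP, hbP, hab, hv_ab⟩ :=
      Submodule.exists_pair_notMem_of_mem hP.ge hPtop (norm_ne_zero_iff.mp (by simp [hv])) hvP
    exact htg.eq_orthogonal_of_notMem_span_pair hdim ha hb hv (hfull a ha haP).ge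
      (hfull b hb hbP).ge (hsub v hv) hab hv_ab
  · exact hfull v hv hvP

/-- If a totally geodesic tangent distribution `D` on the unit sphere of a `3`-dimensional
inner product space, with `dim D_v ≥ 1` everywhere, satisfies `D_{v₁} = v₁^⊥` and
`D_{v₂} = v₂^⊥` for two linearly independent unit vectors `v₁, v₂`, then `D_v = v^⊥`
for every unit vector `v`. -/
theorem totally_geodesic_distribution_two_full_points {E : Type*} [NormedAddCommGroup E]
    [InnerProductSpace ℝ E] [FiniteDimensional ℝ E] (hdim : Module.finrank ℝ E = 3)
    (D : E → Submodule ℝ E)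
    (hsub : ∀ v : E, ‖v‖ = 1 → D v ≤ (Submodule.span ℝ {v})ᗮ)
    (hrank : ∀ v : E, ‖v‖ = 1 → 1 ≤ Module.finrank ℝ (D v))
    (htg : TotallyGeodesicDistribution D)
    (v₁ v₂ : E) (hv₁ : ‖v₁‖ = 1) (hv₂ : ‖v₂‖ = 1)
    (hind : LinearIndependent ℝ ![v₁, v₂])
    (hD₁ : D v₁ = (Submodule.span ℝ {v₁})ᗮ) (hD₂ : D v₂ = (Submodule.span ℝ {v₂})ᗮ) :
    ∀ v : E, ‖v‖ = 1 → D v = (Submodule.span ℝ {v})ᗮ :=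
  totally_geodesic_distribution_two_full_points_general hdim D hsub htg v₁ v₂ hv₁ hv₂ hind hD₁ hD₂
end

section
/- Let D be a totally geodesic tangent distribution on the unit sphere of a 3-dimensional real inner product space E, with dim D_v ≥ 1 for every unit vector v. Then there exists a unit vector ξ ∈ E with D_ξ = ξ^⊥, i.e., dim D_ξ = 2. -/
open scoped RealInnerProductSpace

/-- Any nontrivial submodule of a real inner product space contains a unit vector. -/
lemma exists_unit_mem {E : Type*} [NormedAddCommGroup E] [InnerProductSpace ℝ E]
    (S : Submodule ℝ E) (h : S ≠ ⊥) : ∃ x, ‖x‖ = 1 ∧ x ∈ S := by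
  obtain ⟨x, hxS, hx⟩ := Submodule.exists_mem_ne_zero_of_ne_bot h
  refine ⟨‖x‖⁻¹ • x, ?_, S.smul_mem _ hxS⟩
  rw [norm_smul, norm_inv, norm_norm, inv_mul_cancel₀ (norm_ne_zero_iff.2 hx)]

lemma ne_bot_of_one_le_finrank {E : Type*} [NormedAddCommGroup E] [InnerProductSpace ℝ E]
    {S : Submodule ℝ E} (h : 1 ≤ Module.finrank ℝ S) : S ≠ ⊥ := by
  intro hb
  rw [hb, finrank_bot] at h
  omega

/-- A totally geodesic tangent distribution on the unit sphere of a `3`-dimensional inner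
product space with `dim D_v ≥ 1` for all unit `v` has a point `ξ` where `D_ξ = ξ^⊥`,
i.e., `dim D_ξ = 2`. -/
theorem totally_geodesic_distribution_exists_full_point {E : Type*} [NormedAddCommGroup E]
    [InnerProductSpace ℝ E] [FiniteDimensional ℝ E] (hdim : Module.finrank ℝ E = 3)
    (D : E → Submodule ℝ E)
    (hsub : ∀ v : E, ‖v‖ = 1 → D v ≤ (Submodule.span ℝ {v})ᗮ)
    (hrank : ∀ v : E, ‖v‖ = 1 → 1 ≤ Module.finrank ℝ (D v))
    (htg : TotallyGeodesicDistribution D) :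
    ∃ ξ : E, ‖ξ‖ = 1 ∧ D ξ = (Submodule.span ℝ {ξ})ᗮ := by
  classical
  have horth : ∀ u x : E, ‖u‖ = 1 → x ∈ D u → ⟪u, x⟫ = 0 := by
    intro u x hu hx
    exact (Submodule.mem_orthogonal _ x).1 (hsub u hu hx) u (Submodule.mem_span_singleton_self u)
  -- pick a unit vector v
  obtain ⟨v, hv, -⟩ := exists_unit_mem (⊤ : Submodule ℝ E) (by
    intro h
    have : Module.finrank ℝ E = 0 := by rw [← finrank_top ℝ E, h, finrank_bot]
    omega)
  -- pick a unit vector w ∈ D v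
  obtain ⟨w, hw, hwD⟩ := exists_unit_mem (D v) (ne_bot_of_one_le_finrank (hrank v hv))
  have hvw : ⟪v, w⟫ = 0 := horth v w hv hwD
  have honvw : Orthonormal ℝ ![v, w] := by
    rw [orthonormal_iff_ite]
    intro i j
    fin_cases i <;> fin_cases j <;>
      simp_all [real_inner_self_eq_norm_sq, real_inner_comm v w]
  have hKrange : Set.range ![v, w] = {v, w} := by
    simp [Matrix.range_cons, Matrix.range_empty]
    exact Set.pair_comm w v
  have hKfin : Module.finrank ℝ (Submodule.span ℝ ({v, w} : Set E)) = 2 := by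
    rw [← hKrange, finrank_span_eq_card honvw.linearIndependent]
    simp
  -- pick a unit vector z orthogonal to v and w
  obtain ⟨z, hz, hzK⟩ := exists_unit_mem (Submodule.span ℝ ({v, w} : Set E))ᗮ (by
    apply ne_bot_of_one_le_finrank
    have := Submodule.finrank_add_finrank_orthogonal (𝕜 := ℝ)
      (Submodule.span ℝ ({v, w} : Set E))
    omega)
  have hvz : ⟪v, z⟫ = 0 := hzK v (Submodule.subset_span (by simp))
  have hwz : ⟪w, z⟫ = 0 := hzK w (Submodule.subset_span (by simp))
  have hzv : ⟪z, v⟫ = 0 := by rw [real_inner_comm]; exact hvz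
  have hzw : ⟪z, w⟫ = 0 := by rw [real_inner_comm]; exact hwz
  -- pick a unit vector y ∈ D z
  obtain ⟨y, hy, hyD⟩ := exists_unit_mem (D z) (ne_bot_of_one_le_finrank (hrank z hz))
  have hyne : y ≠ 0 := by intro h; rw [h, norm_zero] at hy; norm_num at hy
  have hzne : z ≠ 0 := by intro h; rw [h, norm_zero] at hz; norm_num at hz
  -- y lies in span {v, w}
  have hspanz : Module.finrank ℝ ((Submodule.span ℝ ({z} : Set E))ᗮ : Submodule ℝ E) = 2 := by
    have := Submodule.finrank_add_finrank_orthogonal (𝕜 := ℝ) (Submodule.span ℝ ({z} : Set E))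
    rw [finrank_span_singleton hzne] at this
    omega
  have hKeq : Submodule.span ℝ ({v, w} : Set E) = (Submodule.span ℝ ({z} : Set E))ᗮ := by
    apply Submodule.eq_of_le_of_finrank_le
    · rw [Submodule.span_le]
      rintro x (rfl | rfl)
      · exact (Submodule.mem_orthogonal _ _).2 fun u hu => by
          rw [Submodule.mem_span_singleton] at hu
          obtain ⟨c, rfl⟩ := hu
          rw [inner_smul_left, real_inner_comm, hvz]
          simp
      · exact (Submodule.mem_orthogonal _ _).2 fun u hu => by
          rw [Submodule.mem_span_singleton] at hu
          obtain ⟨c, rfl⟩ := hu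
          rw [inner_smul_left, real_inner_comm, hwz]
          simp
    · rw [hspanz, hKfin]
  have hyK : y ∈ Submodule.span ℝ ({v, w} : Set E) := by
    rw [hKeq]; exact hsub z hz hyD
  obtain ⟨a, b, hab⟩ := Submodule.mem_span_pair.1 hyK
  -- a² + b² = 1
  have hab1 : a ^ 2 + b ^ 2 = 1 := by
    have h1 : ‖a • v + b • w‖ ^ 2 = 1 := by rw [hab, hy]; norm_num
    rw [norm_add_sq_real, inner_smul_left, inner_smul_right, hvw] at h1
    rw [norm_smul, norm_smul, hv, hw] at h1
    simp only [mul_one, Real.norm_eq_abs, mul_zero] at h1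
    rw [sq_abs, sq_abs] at h1
    linarith
  have ha1 : -1 ≤ a ∧ a ≤ 1 := by constructor <;> nlinarith
  obtain ⟨s, hcos, hsin⟩ : ∃ s : ℝ, Real.cos s = a ∧ Real.sin s = b := by
    refine ⟨if 0 ≤ b then Real.arccos a else -Real.arccos a, ?_, ?_⟩
    · split <;> simp [Real.cos_arccos ha1.1 ha1.2]
    · have hsq : Real.sin (Real.arccos a) = |b| := by
        rw [Real.sin_arccos, show 1 - a ^ 2 = b ^ 2 by linarith]
        exact Real.sqrt_sq_eq_abs b
      split <;> rename_i hb
      · rw [hsq, abs_of_nonneg hb]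
      · rw [Real.sin_neg, hsq, abs_of_neg (lt_of_not_ge hb), neg_neg]
  -- velocity of the great circle at y is in D y
  have hw' : ((-b) • v + a • w) ∈ D y := by
    have := htg v w hv hw hwD s
    rwa [hcos, hsin, hab] at this
  set w' : E := (-b) • v + a • w with hw'def
  -- -z ∈ D y
  have hnz : -z ∈ D y := by
    have := htg z y hz hy hyD (Real.pi / 2)
    simpa [Real.cos_pi_div_two, Real.sin_pi_div_two] using this
  -- -z and w' are orthonormal
  have hw'norm : ‖w'‖ = 1 := by
    have h1 : ‖w'‖ ^ 2 = 1 := by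
      rw [hw'def, norm_add_sq_real, inner_smul_left, inner_smul_right, hvw]
      rw [norm_smul, norm_smul, hv, hw]
      simp only [mul_one, Real.norm_eq_abs, mul_zero]
      rw [sq_abs, sq_abs]
      ring_nf
      linarith
    nlinarith [norm_nonneg w']
  have hzw' : ⟪-z, w'⟫ = 0 := by
    rw [hw'def]
    simp [inner_add_right, inner_smul_right, inner_neg_left, hzv, hzw]
  have hzw'2 : ⟪w', -z⟫ = 0 := by rw [real_inner_comm]; exact hzw'
  have hnznorm : ‖-z‖ = 1 := by rw [norm_neg]; exact hz
  have honzw' : Orthonormal ℝ ![-z, w'] := by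
    rw [orthonormal_iff_ite]
    intro i j
    fin_cases i <;> fin_cases j <;>
      simp [real_inner_self_eq_norm_sq, hz, hw'norm, hzw', hzw'2, hnznorm]
  have hrange : Set.range ![-z, w'] = {-z, w'} := by
    simp [Matrix.range_cons, Matrix.range_empty]
    exact Set.pair_comm w' (-z)
  have hspanle : Submodule.span ℝ ({-z, w'} : Set E) ≤ D y := by
    rw [Submodule.span_le]
    rintro x (rfl | rfl)
    · exact hnz
    · exact hw'
  have h2 : 2 ≤ Module.finrank ℝ (D y) := by
    have hk : Module.finrank ℝ (Submodule.span ℝ ({-z, w'} : Set E)) = 2 := by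
      rw [← hrange, finrank_span_eq_card honzw'.linearIndependent]
      simp
    calc 2 = Module.finrank ℝ (Submodule.span ℝ ({-z, w'} : Set E)) := hk.symm
    _ ≤ Module.finrank ℝ (D y) := Submodule.finrank_mono hspanle
  refine ⟨y, hy, ?_⟩
  apply Submodule.eq_of_le_of_finrank_le (hsub y hy)
  have := Submodule.finrank_add_finrank_orthogonal (𝕜 := ℝ) (Submodule.span ℝ ({y} : Set E))
  rw [finrank_span_singleton hyne] at this
  omega
end

section
/- Let D be a totally geodesic tangent distribution on the unit sphere of a 3-dimensional real inner product space E with dim D_v ≥ 1 for every unit vector v, and suppose ξ is a unit vector such that every unit vector v with dim D_v = 2 satisfies v = ξ or v = −ξ. Then dim D_ξ = 2, and for every unit vector v ∉ {ξ, −ξ}, the subspace D_v is the 1-dimensional span of ξ − ⟨ξ, v⟩·v, i.e., the tangent line at v to the great circle through v and ±ξ. -/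
open scoped RealInnerProductSpace

open Module Submodule

section helpers
variable {E : Type*} [NormedAddCommGroup E] [InnerProductSpace ℝ E]


lemma exists_cos_sin' (a b : ℝ) (h : a^2 + b^2 = 1) :
    ∃ t : ℝ, Real.cos t = a ∧ Real.sin t = b := by
  have ha1 : -1 ≤ a := by nlinarith [sq_nonneg b]
  have ha2 : a ≤ 1 := by nlinarith [sq_nonneg b]
  have hsin : Real.sin (Real.arccos a) = |b| := by
    rw [Real.sin_arccos, show 1 - a^2 = b^2 by linarith, Real.sqrt_sq_eq_abs]
  rcases le_or_gt 0 b with hb | hb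
  · exact ⟨Real.arccos a, Real.cos_arccos ha1 ha2, by rw [hsin, abs_of_nonneg hb]⟩
  · exact ⟨-Real.arccos a, by rw [Real.cos_neg]; exact Real.cos_arccos ha1 ha2,
      by rw [Real.sin_neg, hsin, abs_of_neg hb, neg_neg]⟩

lemma norm_sq_combo {v w : E} (hv : ‖v‖ = 1) (hw : ‖w‖ = 1) (hvw : ⟪v, w⟫ = 0) (a b : ℝ) :
    ‖a • v + b • w‖ ^ 2 = a ^ 2 + b ^ 2 := by
  have h1 : ⟪a • v, b • w⟫ = 0 := by
    rw [real_inner_smul_left, real_inner_smul_right, hvw]; ring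
  rw [norm_add_sq_real, h1, norm_smul, norm_smul, hv, hw, Real.norm_eq_abs, Real.norm_eq_abs]
  rw [mul_one, mul_one, sq_abs, sq_abs]; ring

lemma norm_combo_one {v w : E} (hv : ‖v‖ = 1) (hw : ‖w‖ = 1) (hvw : ⟪v, w⟫ = 0) {a b : ℝ}
    (hab : a ^ 2 + b ^ 2 = 1) : ‖a • v + b • w‖ = 1 := by
  have := norm_sq_combo hv hw hvw a b
  nlinarith [norm_nonneg (a • v + b • w)]

lemma finrank_span_pair' [FiniteDimensional ℝ E] {v w : E} (hv : ‖v‖ = 1) (hw : ‖w‖ = 1)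
    (hvw : ⟪v, w⟫ = 0) : finrank ℝ (span ℝ ({v, w} : Set E)) = 2 := by
  have hv0 : v ≠ 0 := by intro h; rw [h, norm_zero] at hv; norm_num at hv
  have hw0 : w ≠ 0 := by intro h; rw [h, norm_zero] at hw; norm_num at hw
  have hle : finrank ℝ (span ℝ ({v, w} : Set E)) ≤ 2 := by
    rw [show ({v, w} : Set E) = insert v {w} from rfl, span_insert]
    have := Submodule.finrank_sup_add_finrank_inf_eq (ℝ ∙ v) (span ℝ ({w} : Set E))
    rw [finrank_span_singleton hv0, finrank_span_singleton hw0] at this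
    omega
  have hge : ¬ finrank ℝ (span ℝ ({v, w} : Set E)) ≤ 1 := by
    intro h
    have hsub : (ℝ ∙ v) ≤ span ℝ ({v, w} : Set E) :=
      span_mono (by simp)
    have heq : (ℝ ∙ v) = span ℝ ({v, w} : Set E) :=
      Submodule.eq_of_le_of_finrank_le hsub (by rw [finrank_span_singleton hv0]; exact h)
    have hwmem : w ∈ (ℝ ∙ v) := heq ▸ subset_span (by simp)
    obtain ⟨c, hc⟩ := mem_span_singleton.mp hwmem
    have : ⟪v, w⟫ = c := by
      rw [← hc, real_inner_smul_right, real_inner_self_eq_norm_sq, hv]; ring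
    rw [hvw] at this
    rw [← hc, ← this, zero_smul] at hw0
    exact hw0 rfl
  omega


lemma tangent_mem {D : E → Submodule ℝ E} (htg : TotallyGeodesicDistribution D)
    {v w : E} (hv : ‖v‖ = 1) (hw : ‖w‖ = 1) (hvw : ⟪v, w⟫ = 0) (hwD : w ∈ D v)
    {p : E} (hp : ‖p‖ = 1) (hpP : p ∈ span ℝ ({v, w} : Set E)) :
    ∃ u : E, ‖u‖ = 1 ∧ ⟪p, u⟫ = 0 ∧ u ∈ span ℝ ({v, w} : Set E) ∧ u ∈ D p := by
  obtain ⟨a, b, hab⟩ := Submodule.mem_span_pair.mp hpP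
  have hsq : a ^ 2 + b ^ 2 = 1 := by
    have h1 := norm_sq_combo hv hw hvw a b
    rw [hab, hp] at h1; rw [← h1]; norm_num
  obtain ⟨t, hc, hs⟩ := exists_cos_sin' a b hsq
  rw [← hc, ← hs] at hab
  have hwv : ⟪w, v⟫ = 0 := by rw [real_inner_comm]; exact hvw
  have hvv : ⟪v, v⟫ = (1 : ℝ) := by rw [real_inner_self_eq_norm_sq, hv]; norm_num
  have hww : ⟪w, w⟫ = (1 : ℝ) := by rw [real_inner_self_eq_norm_sq, hw]; norm_num
  refine ⟨-(Real.sin t) • v + Real.cos t • w, ?_, ?_, ?_, ?_⟩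
  · exact norm_combo_one hv hw hvw (by rw [neg_pow]; simp [Real.sin_sq_add_cos_sq])
  · rw [← hab]
    simp only [inner_add_left, inner_add_right, real_inner_smul_left, real_inner_smul_right,
      hvw, hwv, hvv, hww]
    ring
  · exact Submodule.mem_span_pair.mpr ⟨-(Real.sin t), Real.cos t, rfl⟩
  · rw [← hab]; exact htg v w hv hw hwD t

lemma exists_unit_mem_D {D : E → Submodule ℝ E} [FiniteDimensional ℝ E]
    (hsub : ∀ v : E, ‖v‖ = 1 → D v ≤ (span ℝ {v})ᗮ)
    {v : E} (hv : ‖v‖ = 1) (hr : 1 ≤ finrank ℝ (D v)) :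
    ∃ w : E, ‖w‖ = 1 ∧ ⟪v, w⟫ = 0 ∧ w ∈ D v := by
  have hbot : D v ≠ ⊥ := by
    intro h; rw [h, finrank_bot] at hr; omega
  obtain ⟨x, hxD, hx0⟩ := Submodule.exists_mem_ne_zero_of_ne_bot hbot
  refine ⟨(‖x‖⁻¹ : ℝ) • x, norm_smul_inv_norm hx0, ?_, Submodule.smul_mem _ _ hxD⟩
  exact Submodule.mem_orthogonal_singleton_iff_inner_right.mp
    (hsub v hv (Submodule.smul_mem _ _ hxD))

lemma planes_eq [FiniteDimensional ℝ E] {P₁ P₂ : Submodule ℝ E}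
    (h1 : finrank ℝ P₁ = 2) (h2 : finrank ℝ P₂ = 2)
    {p u : E} (hp : ‖p‖ = 1) (hu : ‖u‖ = 1) (hpu : ⟪p, u⟫ = 0)
    (hpP1 : p ∈ P₁) (huP1 : u ∈ P₁) (hpP2 : p ∈ P₂) (huP2 : u ∈ P₂) : P₁ = P₂ := by
  have hsp := finrank_span_pair' hp hu hpu
  have hle1 : span ℝ ({p, u} : Set E) ≤ P₁ := span_le.mpr (by
    rintro x (rfl | rfl); exact hpP1; exact huP1)
  have hle2 : span ℝ ({p, u} : Set E) ≤ P₂ := span_le.mpr (by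
    rintro x (rfl | rfl); exact hpP2; exact huP2)
  have e1 : span ℝ ({p, u} : Set E) = P₁ :=
    Submodule.eq_of_le_of_finrank_le hle1 (by omega)
  have e2 : span ℝ ({p, u} : Set E) = P₂ :=
    Submodule.eq_of_le_of_finrank_le hle2 (by omega)
  rw [← e1, ← e2]

lemma exists_unit_notin [FiniteDimensional ℝ E] (hdim : finrank ℝ E = 3)
    {P : Submodule ℝ E} (hP : finrank ℝ P = 2) :
    ∃ q : E, ‖q‖ = 1 ∧ q ∉ P := by
  have hPne : P ≠ ⊤ := by
    intro h; rw [h, finrank_top] at hP; omega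
  obtain ⟨x, _, hxP⟩ := SetLike.exists_of_lt (show P < ⊤ from lt_top_iff_ne_top.mpr hPne)
  have hx0 : x ≠ 0 := by rintro rfl; exact hxP (zero_mem P)
  refine ⟨(‖x‖⁻¹ : ℝ) • x, norm_smul_inv_norm hx0, ?_⟩
  intro hq
  have := Submodule.smul_mem P (‖x‖ : ℝ) hq
  rw [smul_smul, mul_inv_cancel₀ (by simpa using hx0), one_smul] at this
  exact hxP this

lemma exists_unit_inter [FiniteDimensional ℝ E] (hdim : finrank ℝ E = 3)
    {P₁ P₂ : Submodule ℝ E} (h1 : finrank ℝ P₁ = 2) (h2 : finrank ℝ P₂ = 2) :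
    ∃ p : E, ‖p‖ = 1 ∧ p ∈ P₁ ∧ p ∈ P₂ := by
  have hsum := Submodule.finrank_sup_add_finrank_inf_eq P₁ P₂
  have hsup : finrank ℝ ↥(P₁ ⊔ P₂) ≤ 3 := hdim ▸ Submodule.finrank_le _
  have hinf : 1 ≤ finrank ℝ ↥(P₁ ⊓ P₂) := by omega
  have hbot : P₁ ⊓ P₂ ≠ ⊥ := by
    intro h; rw [h, finrank_bot] at hinf; omega
  obtain ⟨y, hymem, hy0⟩ := Submodule.exists_mem_ne_zero_of_ne_bot hbot
  exact ⟨(‖y‖⁻¹ : ℝ) • y, norm_smul_inv_norm hy0,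
    Submodule.smul_mem _ _ hymem.1, Submodule.smul_mem _ _ hymem.2⟩
end helpers

section key

variable {E : Type*} [NormedAddCommGroup E] [InnerProductSpace ℝ E] [FiniteDimensional ℝ E]

lemma finrank_orth_unit (hdim : finrank ℝ E = 3) {p : E} (hp : ‖p‖ = 1) :
    finrank ℝ ((span ℝ ({p} : Set E))ᗮ) = 2 := by
  have hp0 : p ≠ 0 := by intro h; rw [h, norm_zero] at hp; norm_num at hp
  have h := Submodule.finrank_add_finrank_orthogonal (𝕜 := ℝ) (span ℝ ({p} : Set E))
  rw [finrank_span_singleton hp0, hdim] at h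
  omega

lemma rank_two_at (hdim : finrank ℝ E = 3)
    {D : E → Submodule ℝ E} (hsub : ∀ v : E, ‖v‖ = 1 → D v ≤ (span ℝ {v})ᗮ)
    {P₁ P₂ : Submodule ℝ E} (hP₁ : finrank ℝ P₁ = 2) (hP₂ : finrank ℝ P₂ = 2) (hne : P₁ ≠ P₂)
    {p u₁ u₂ : E} (hp : ‖p‖ = 1) (hu₁ : ‖u₁‖ = 1) (hu₂ : ‖u₂‖ = 1)
    (hpu₁ : ⟪p, u₁⟫ = 0) (hpu₂ : ⟪p, u₂⟫ = 0)
    (hpP₁ : p ∈ P₁) (hu₁P₁ : u₁ ∈ P₁) (hpP₂ : p ∈ P₂) (hu₂P₂ : u₂ ∈ P₂)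
    (hu₁D : u₁ ∈ D p) (hu₂D : u₂ ∈ D p) : finrank ℝ (D p) = 2 := by
  have hle : finrank ℝ (D p) ≤ 2 := by
    have h2 := finrank_orth_unit hdim hp
    have := Submodule.finrank_mono (hsub p hp)
    omega
  rcases Nat.lt_or_ge (finrank ℝ (D p)) 2 with hlt | hge
  · exfalso
    have hu₁0 : u₁ ≠ 0 := by intro h; rw [h, norm_zero] at hu₁; norm_num at hu₁
    have hu₂0 : u₂ ≠ 0 := by intro h; rw [h, norm_zero] at hu₂; norm_num at hu₂
    have hsp1 : (span ℝ ({u₁} : Set E)) ≤ D p := span_le.mpr (by rintro x rfl; exact hu₁D)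
    have heq : (span ℝ ({u₁} : Set E)) = D p :=
      Submodule.eq_of_le_of_finrank_le hsp1 (by rw [finrank_span_singleton hu₁0]; omega)
    have hmem : u₂ ∈ span ℝ ({u₁} : Set E) := heq ▸ hu₂D
    obtain ⟨c, hc⟩ := mem_span_singleton.mp hmem
    have hc0 : c ≠ 0 := by rintro rfl; rw [zero_smul] at hc; exact hu₂0 hc.symm
    have hu₁P₂ : u₁ ∈ P₂ := by
      have h1 : u₁ = c⁻¹ • u₂ := by rw [← hc, smul_smul, inv_mul_cancel₀ hc0, one_smul]
      rw [h1]; exact Submodule.smul_mem _ _ hu₂P₂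
    exact hne (planes_eq hP₁ hP₂ hp hu₁ hpu₁ hpP₁ hu₁P₁ hpP₂ hu₁P₂)
  · omega

lemma xi_mem_plane (hdim : finrank ℝ E = 3) {D : E → Submodule ℝ E}
    (hsub : ∀ v : E, ‖v‖ = 1 → D v ≤ (span ℝ {v})ᗮ)
    (hrank : ∀ v : E, ‖v‖ = 1 → 1 ≤ finrank ℝ (D v))
    (htg : TotallyGeodesicDistribution D)
    {ξ : E} (hξ : ‖ξ‖ = 1)
    (honly : ∀ v : E, ‖v‖ = 1 → finrank ℝ (D v) = 2 → v = ξ ∨ v = -ξ)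
    {v w : E} (hv : ‖v‖ = 1) (hw : ‖w‖ = 1) (hvw : ⟪v, w⟫ = 0) (hwD : w ∈ D v) :
    ξ ∈ span ℝ ({v, w} : Set E) := by
  have hP : finrank ℝ (span ℝ ({v, w} : Set E)) = 2 := finrank_span_pair' hv hw hvw
  obtain ⟨q, hq, hqP⟩ := exists_unit_notin hdim hP
  obtain ⟨w', hw', hqw', hw'D⟩ := exists_unit_mem_D hsub hq (hrank q hq)
  have hP' : finrank ℝ (span ℝ ({q, w'} : Set E)) = 2 := finrank_span_pair' hq hw' hqw'
  obtain ⟨p, hp, hpP, hpP'⟩ := exists_unit_inter hdim hP hP'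
  obtain ⟨u₁, hu₁, hpu₁, hu₁P, hu₁D⟩ := tangent_mem htg hv hw hvw hwD hp hpP
  obtain ⟨u₂, hu₂, hpu₂, hu₂P', hu₂D⟩ := tangent_mem htg hq hw' hqw' hw'D hp hpP'
  have hne : span ℝ ({v, w} : Set E) ≠ span ℝ ({q, w'} : Set E) := by
    intro h
    exact hqP (h ▸ subset_span (by simp))
  have hrk2 : finrank ℝ (D p) = 2 :=
    rank_two_at hdim hsub hP hP' hne hp hu₁ hu₂ hpu₁ hpu₂ hpP hu₁P hpP' hu₂P' hu₁D hu₂D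
  rcases honly p hp hrk2 with h | h
  · exact h ▸ hpP
  · have h2 : ξ = -p := by rw [h, neg_neg]
    rw [h2]; exact neg_mem hpP
end key

/-- If `D` is a totally geodesic tangent distribution on the unit sphere of a `3`-dimensional
inner product space with `dim D_v ≥ 1` everywhere, and `ξ` is a unit vector such that every
unit vector `v` with `dim D_v = 2` equals `ξ` or `-ξ`, then `dim D_ξ = 2` and for every
unit vector `v ∉ {ξ, -ξ}` the subspace `D_v` is the line spanned by `ξ - ⟪ξ, v⟫ • v`
(the tangent line at `v` to the great circle through `v` and `±ξ`). -/
theorem totally_geodesic_distribution_one_singular_pair {E : Type*} [NormedAddCommGroup E]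
    [InnerProductSpace ℝ E] [FiniteDimensional ℝ E] (hdim : Module.finrank ℝ E = 3)
    (D : E → Submodule ℝ E)
    (hsub : ∀ v : E, ‖v‖ = 1 → D v ≤ (Submodule.span ℝ {v})ᗮ)
    (hrank : ∀ v : E, ‖v‖ = 1 → 1 ≤ Module.finrank ℝ (D v))
    (htg : TotallyGeodesicDistribution D)
    (ξ : E) (hξ : ‖ξ‖ = 1)
    (honly : ∀ v : E, ‖v‖ = 1 → Module.finrank ℝ (D v) = 2 → v = ξ ∨ v = -ξ) :
    Module.finrank ℝ (D ξ) = 2 ∧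
      ∀ v : E, ‖v‖ = 1 → v ≠ ξ → v ≠ -ξ →
        D v = Submodule.span ℝ {ξ - ⟪ξ, v⟫ • v} := by
  constructor
  · -- finrank D ξ = 2
    -- pick v₁ unit orthogonal to ξ
    have horth : finrank ℝ ((span ℝ ({ξ} : Set E))ᗮ) = 2 := finrank_orth_unit hdim hξ
    have hbot : (span ℝ ({ξ} : Set E))ᗮ ≠ ⊥ := by
      intro h; rw [h, finrank_bot] at horth; omega
    obtain ⟨x, hxmem, hx0⟩ := Submodule.exists_mem_ne_zero_of_ne_bot hbot
    set v₁ : E := (‖x‖⁻¹ : ℝ) • x with hv₁def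
    have hv₁ : ‖v₁‖ = 1 := norm_smul_inv_norm hx0
    obtain ⟨w₁, hw₁, hv₁w₁, hw₁D⟩ := exists_unit_mem_D hsub hv₁ (hrank v₁ hv₁)
    have hP₁ : finrank ℝ (span ℝ ({v₁, w₁} : Set E)) = 2 := finrank_span_pair' hv₁ hw₁ hv₁w₁
    have hξP₁ : ξ ∈ span ℝ ({v₁, w₁} : Set E) :=
      xi_mem_plane hdim hsub hrank htg hξ honly hv₁ hw₁ hv₁w₁ hw₁D
    obtain ⟨u₁, hu₁, hξu₁, hu₁P₁, hu₁D⟩ := tangent_mem htg hv₁ hw₁ hv₁w₁ hw₁D hξ hξP₁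
    obtain ⟨v₂, hv₂, hv₂P₁⟩ := exists_unit_notin hdim hP₁
    obtain ⟨w₂, hw₂, hv₂w₂, hw₂D⟩ := exists_unit_mem_D hsub hv₂ (hrank v₂ hv₂)
    have hP₂ : finrank ℝ (span ℝ ({v₂, w₂} : Set E)) = 2 := finrank_span_pair' hv₂ hw₂ hv₂w₂
    have hξP₂ : ξ ∈ span ℝ ({v₂, w₂} : Set E) :=
      xi_mem_plane hdim hsub hrank htg hξ honly hv₂ hw₂ hv₂w₂ hw₂D
    obtain ⟨u₂, hu₂, hξu₂, hu₂P₂, hu₂D⟩ := tangent_mem htg hv₂ hw₂ hv₂w₂ hw₂D hξ hξP₂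
    have hne : span ℝ ({v₁, w₁} : Set E) ≠ span ℝ ({v₂, w₂} : Set E) := by
      intro h
      exact hv₂P₁ (h ▸ subset_span (by simp))
    exact rank_two_at hdim hsub hP₁ hP₂ hne hξ hu₁ hu₂ hξu₁ hξu₂ hξP₁ hu₁P₁ hξP₂ hu₂P₂ hu₁D hu₂D
  · intro v hv hv1 hv2
    obtain ⟨w, hw, hvw, hwD⟩ := exists_unit_mem_D hsub hv (hrank v hv)
    have hw0 : w ≠ 0 := by intro h; rw [h, norm_zero] at hw; norm_num at hw
    have hξP : ξ ∈ span ℝ ({v, w} : Set E) :=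
      xi_mem_plane hdim hsub hrank htg hξ honly hv hw hvw hwD
    obtain ⟨a, b, hab⟩ := Submodule.mem_span_pair.mp hξP
    have hwv : ⟪w, v⟫ = 0 := by rw [real_inner_comm]; exact hvw
    have hvv : ⟪v, v⟫ = (1 : ℝ) := by rw [real_inner_self_eq_norm_sq, hv]; norm_num
    have hinner : ⟪ξ, v⟫ = a := by
      rw [← hab, inner_add_left, real_inner_smul_left, real_inner_smul_left, hvv, hwv]; ring
    have hb0 : b ≠ 0 := by
      rintro rfl
      rw [zero_smul, add_zero] at hab
      have habs : |a| = 1 := by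
        have := congrArg norm hab
        rw [norm_smul, Real.norm_eq_abs, hv, mul_one, hξ] at this
        exact this
      rcases abs_eq (by norm_num : (0:ℝ) ≤ 1) |>.mp habs with h | h
      · rw [h, one_smul] at hab; exact hv1 hab
      · rw [h, neg_one_smul] at hab
        exact hv2 (by rw [← hab, neg_neg])
    have heq : ξ - ⟪ξ, v⟫ • v = b • w := by
      rw [hinner, ← hab]; abel
    rw [heq, span_singleton_smul_eq (isUnit_iff_ne_zero.mpr hb0)]
    have hrk1 : finrank ℝ (D v) = 1 := by
      have hle : finrank ℝ (D v) ≤ 2 := by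
        have h2 := finrank_orth_unit hdim hv
        have := Submodule.finrank_mono (hsub v hv)
        omega
      have hne2 : finrank ℝ (D v) ≠ 2 := by
        intro h
        rcases honly v hv h with h' | h'
        · exact hv1 h'
        · exact hv2 h'
      have := hrank v hv
      omega
    have hsp : (span ℝ ({w} : Set E)) ≤ D v := span_le.mpr (by rintro x rfl; exact hwD)
    exact (Submodule.eq_of_le_of_finrank_le hsp
      (by rw [finrank_span_singleton hw0]; omega)).symm
end

section
/- Let E be a 3-dimensional real inner product space and R an algebraic curvature tensor on E with signed sectional curvatures and cvc(0). Then the following are equivalent: (i) every sectional curvature of R vanishes, i.e., R(x,y,y,x) = 0 for all orthonormal x, y ∈ E; (ii) there exist two linearly independent unit vectors v₁, v₂ ∈ E such that R(w, v_i)v_i = 0 for every w orthogonal to v_i, for i = 1, 2; (iii) for every unit vector v ∈ E and every w orthogonal to v, R(w,v)v = 0. -/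
open scoped RealInnerProductSpace

/-- `T` has constant vector curvature zero: every unit vector is contained in a flat plane. -/
def AlgCurvTensor.CVC0 {E : Type*} [NormedAddCommGroup E] [InnerProductSpace ℝ E]
    (T : AlgCurvTensor E) : Prop :=
  ∀ v : E, ‖v‖ = 1 → ∃ w : E, ‖w‖ = 1 ∧ ⟪v, w⟫ = 0 ∧ T.R v w w v = 0

/-!
In dimension three the cross product identifies `Λ²E` with `E`, so `R` becomes a symmetric
bilinear form `B` on `E` with `R(x, y, z, w) = B(x × y, w × z)`. Every vector is a multiple of
some `x × y` with `x, y` orthonormal, so `B(n, n)` is a multiple of a sectional curvature with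
a nonnegative coefficient: signed curvature makes `B` semidefinite, and vanishing sectional
curvature makes `B` alternating, hence zero. If all planes through a unit vector `v` are flat,
writing `n ⟂ v` as `v × (n × v)` gives `B(n, n) = 0`, and semidefiniteness puts `v⟂` into the
kernel of `B`; two independent such vectors give `v₁⟂ + v₂⟂ = E`, hence `B = 0`. So (i) and
(ii) both force `R = 0`, from which (iii), and then (i) and (ii), follow at once.
-/

open scoped Matrix
open Module

namespace Module.Basis

variable {R M : Type*} [CommRing R] [AddCommGroup M] [Module R M] (b : Basis (Fin 3) R M)

noncomputable def cross : M →ₗ[R] M →ₗ[R] M :=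
  (crossProduct.compl₁₂ b.equivFun.toLinearMap b.equivFun.toLinearMap).compr₂
    b.equivFun.symm.toLinearMap

lemma repr_cross (x y : M) : ⇑(b.repr (b.cross x y)) = ⇑(b.repr x) ⨯₃ ⇑(b.repr y) := by
  rw [← b.equivFun_apply, ← b.equivFun_apply, ← b.equivFun_apply]
  simp only [cross, LinearMap.compr₂_apply, LinearMap.compl₁₂_apply, LinearEquiv.coe_coe,
    LinearEquiv.apply_symm_apply]

lemma apply_eq_sum_cross_of_isAlt {ω : M →ₗ[R] M →ₗ[R] R} (hω : ω.IsAlt) (x y : M) :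
    ω x y = ∑ k, b.repr (b.cross x y) k * ω (b (k + 1)) (b (k + 2)) := by
  have hexp : ω x y = ∑ i, ∑ j, b.repr x i * b.repr y j * ω (b i) (b j) := by
    conv_lhs => rw [← Matrix.toLinearMap₂_toMatrix₂ b b ω]
    simp only [Matrix.toLinearMap₂_apply, LinearMap.toMatrix₂_apply, smul_eq_mul, mul_assoc]
  rw [hexp, repr_cross]
  simp only [Fin.sum_univ_three, hω.self_eq_zero, cross_apply, Matrix.cons_val_zero,
    Matrix.cons_val_one, Matrix.cons_val_two, Matrix.tail_cons, Matrix.head_cons, Fin.reduceAdd,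
    ← hω.neg (b 0) (b 1), ← hω.neg (b 2) (b 0), ← hω.neg (b 1) (b 2)]
  ring

end Module.Basis

lemma exists_norm_eq_one_inner_eq_zero {E : Type*} [NormedAddCommGroup E]
    [InnerProductSpace ℝ E] [FiniteDimensional ℝ E] (h : 2 ≤ finrank ℝ E) (v : E) :
    ∃ x : E, ‖x‖ = 1 ∧ ⟪v, x⟫ = 0 := by
  have hK : (ℝ ∙ v)ᗮ ≠ ⊥ := by
    intro hbot
    have h1 := (ℝ ∙ v).finrank_add_finrank_orthogonal
    have h2 : finrank ℝ (ℝ ∙ v) ≤ 1 := by simpa using finrank_span_le_card ({v} : Set E)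
    rw [hbot, finrank_bot] at h1
    omega
  obtain ⟨z, hz, hz0⟩ := Submodule.exists_mem_ne_zero_of_ne_bot hK
  refine ⟨‖z‖⁻¹ • z, norm_smul_inv_norm hz0, ?_⟩
  rw [real_inner_smul_right,
    Submodule.inner_right_of_mem_orthogonal (Submodule.mem_span_singleton_self v) hz, mul_zero]

lemma LinearMap.BilinForm.IsPosSemidef.apply_eq_zero_of_apply_self_eq_zero {R M : Type*}
    [Field R] [LinearOrder R] [IsStrictOrderedRing R] [AddCommGroup M] [Module R M]
    {B : LinearMap.BilinForm R M} (hB : B.IsPosSemidef) {x : M} (hx : B x x = 0) (y : M) :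
    B x y = 0 := by
  have hline : ∀ t : R, 0 ≤ 2 * t * B x y + t ^ 2 * B y y := fun t => by
    have := hB.isNonneg.nonneg (x + t • y)
    simp only [map_add, map_smul, LinearMap.add_apply, LinearMap.smul_apply, smul_eq_mul, hx,
      hB.isSymm.eq y x] at this
    linarith
  -- a quadratic `2 t c + t² M` with `M ≥ 0` that is nonnegative for all `t` has `c = 0`
  have hy := hB.isNonneg.nonneg y
  have h := hline (-B x y / (B y y + 1))
  field_simp at h
  nlinarith [sq_nonneg (B x y)]

lemma LinearIndependent.orthogonal_sup_orthogonal_eq_top {𝕜 E : Type*} [RCLike 𝕜]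
    [NormedAddCommGroup E] [InnerProductSpace 𝕜 E] [FiniteDimensional 𝕜 E] {v₁ v₂ : E}
    (h : LinearIndependent 𝕜 ![v₁, v₂]) : (𝕜 ∙ v₁)ᗮ ⊔ (𝕜 ∙ v₂)ᗮ = ⊤ := by
  have hdisj : Disjoint (𝕜 ∙ v₂) (𝕜 ∙ v₁) := by
    rw [Submodule.disjoint_span_singleton' (x := v₁) (h.ne_zero 0), Submodule.mem_span_singleton]
    rintro ⟨a, ha⟩
    exact (linearIndependent_fin2.mp h).2 a ha
  rw [← Submodule.orthogonal_eq_bot_iff, ← Submodule.inf_orthogonal,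
    Submodule.orthogonal_orthogonal, Submodule.orthogonal_orthogonal, inf_comm]
  exact hdisj.eq_bot

namespace OrthonormalBasis

variable {E : Type*} [NormedAddCommGroup E] [InnerProductSpace ℝ E]
  (b : OrthonormalBasis (Fin 3) ℝ E)

lemma inner_eq_dotProduct (x y : E) : ⟪x, y⟫ = ⇑(b.toBasis.repr x) ⬝ᵥ ⇑(b.toBasis.repr y) := by
  rw [← b.repr.inner_map_map, EuclideanSpace.inner_eq_star_dotProduct, dotProduct_comm]
  rfl

lemma inner_cross_cross (x y z w : E) :
    ⟪b.toBasis.cross x y, b.toBasis.cross z w⟫ = ⟪x, z⟫ * ⟪y, w⟫ - ⟪x, w⟫ * ⟪y, z⟫ := by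
  simp only [b.inner_eq_dotProduct, Module.Basis.repr_cross, cross_dot_cross]

lemma inner_cross_self (x y : E) : ⟪y, b.toBasis.cross x y⟫ = 0 := by
  simp only [b.inner_eq_dotProduct, Module.Basis.repr_cross, dot_cross_self]

lemma cross_cross_eq_smul_sub_smul (x y z : E) :
    b.toBasis.cross x (b.toBasis.cross y z) = ⟪x, z⟫ • y - ⟪x, y⟫ • z := by
  apply b.toBasis.repr.injective
  apply DFunLike.coe_injective
  rw [map_sub, map_smul, map_smul, Finsupp.coe_sub, Finsupp.coe_smul, Finsupp.coe_smul,
    b.toBasis.repr_cross, b.toBasis.repr_cross, cross_cross_eq_smul_sub_smul',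
    b.inner_eq_dotProduct, b.inner_eq_dotProduct, dotProduct_comm (b.toBasis.repr y)]

lemma exists_orthonormal_eq_smul_cross (n : E) :
    ∃ x y : E, ∃ c : ℝ, ‖x‖ = 1 ∧ ‖y‖ = 1 ∧ ⟪x, y⟫ = 0 ∧ n = c • b.toBasis.cross x y := by
  have := Module.Finite.of_basis b.toBasis
  rcases eq_or_ne n 0 with rfl | hn
  · exact ⟨b 0, b 1, 0, b.orthonormal.1 0, b.orthonormal.1 1, b.orthonormal.2 (by decide),
      (zero_smul _ _).symm⟩
  obtain ⟨x, hx, hnx⟩ :=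
    exists_norm_eq_one_inner_eq_zero (by simp [finrank_eq_card_basis b.toBasis]) n
  have hxn : ⟪x, n⟫ = 0 := by rwa [real_inner_comm]
  have hxx : ⟪x, x⟫ = 1 := by rw [real_inner_self_eq_norm_sq, hx, one_pow]
  have hnorm : ‖b.toBasis.cross n x‖ = ‖n‖ := by
    rw [← sq_eq_sq₀ (norm_nonneg _) (norm_nonneg _), ← real_inner_self_eq_norm_sq,
      inner_cross_cross, hxx, hxn, real_inner_self_eq_norm_sq]
    ring
  refine ⟨x, ‖n‖⁻¹ • b.toBasis.cross n x, ‖n‖, hx, ?_, ?_, ?_⟩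
  · rw [norm_smul, hnorm, norm_inv, norm_norm, inv_mul_cancel₀ (norm_ne_zero_iff.mpr hn)]
  · rw [real_inner_smul_right, inner_cross_self, mul_zero]
  · rw [map_smul, cross_cross_eq_smul_sub_smul, hxx, hxn, zero_smul, sub_zero, one_smul,
      smul_inv_smul₀ (norm_ne_zero_iff.mpr hn)]

end OrthonormalBasis

namespace AlgCurvTensor

variable {E : Type*} [NormedAddCommGroup E] [InnerProductSpace ℝ E] (T : AlgCurvTensor E)

lemma isAlt_apply (x y : E) : (T.R x y).IsAlt := fun z => by linarith [T.antisym_snd x y z z]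

/-- The curvature operator on `Λ²E`, transported to `E` along `x ∧ y ↦ x × y`; the sign makes
`curvatureForm b (x × y) (x × y) = R(x, y, y, x)`. -/
noncomputable def curvatureForm (b : Basis (Fin 3) ℝ E) : LinearMap.BilinForm ℝ E :=
  Matrix.toBilin b (Matrix.of fun k l => T.R (b (k + 1)) (b (k + 2)) (b (l + 2)) (b (l + 1)))

lemma apply_eq_curvatureForm_cross (b : Basis (Fin 3) ℝ E) (x y z w : E) :
    T.R x y z w = T.curvatureForm b (b.cross x y) (b.cross w z) := by
  rw [T.pair_symm, b.apply_eq_sum_cross_of_isAlt (T.isAlt_apply z w), curvatureForm,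
    Matrix.toBilin_apply]
  refine Finset.sum_congr rfl fun k _ => ?_
  rw [T.pair_symm, T.antisym_snd, b.apply_eq_sum_cross_of_isAlt (T.isAlt_apply _ _) w z,
    ← Finset.sum_neg_distrib, Finset.mul_sum]
  refine Finset.sum_congr rfl fun l _ => ?_
  rw [Matrix.of_apply, T.antisym_snd _ _ (b (l + 2))]
  ring

lemma curvatureForm_isSymm (b : Basis (Fin 3) ℝ E) : (T.curvatureForm b).IsSymm :=
  (Matrix.isSymm_toBilin_iff_isSymm b).mpr <| Matrix.IsSymm.ext fun k l => by
    rw [Matrix.of_apply, Matrix.of_apply, T.pair_symm, T.antisym_fst, T.antisym_snd, neg_neg]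

lemma eq_zero_of_curvatureForm_eq_zero {b : Basis (Fin 3) ℝ E} (h : T.curvatureForm b = 0) :
    T.R = 0 := by
  ext x y z w
  rw [T.apply_eq_curvatureForm_cross b, h]
  rfl

variable (b : OrthonormalBasis (Fin 3) ℝ E)

lemma exists_curvatureForm_apply_self_eq (n : E) :
    ∃ x y : E, ∃ c : ℝ, ‖x‖ = 1 ∧ ‖y‖ = 1 ∧ ⟪x, y⟫ = 0 ∧
      T.curvatureForm b.toBasis n n = c ^ 2 * T.R x y y x := by
  obtain ⟨x, y, c, hx, hy, hxy, rfl⟩ := b.exists_orthonormal_eq_smul_cross n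
  refine ⟨x, y, c, hx, hy, hxy, ?_⟩
  simp only [map_smul, LinearMap.smul_apply, smul_eq_mul, ← T.apply_eq_curvatureForm_cross]
  ring

variable {T} in
lemma SignedSec.isPosSemidef_curvatureForm (hT : T.SignedSec) :
    (T.curvatureForm b.toBasis).IsPosSemidef ∨ (-T.curvatureForm b.toBasis).IsPosSemidef := by
  rcases hT with hpos | hneg
  · refine Or.inl ⟨T.curvatureForm_isSymm _, ⟨fun n => ?_⟩⟩
    obtain ⟨x, y, c, hx, hy, hxy, h⟩ := T.exists_curvatureForm_apply_self_eq b n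
    rw [h]
    exact mul_nonneg (sq_nonneg c) (hpos x y hx hy hxy)
  · refine Or.inr ⟨(T.curvatureForm_isSymm _).neg, ⟨fun n => ?_⟩⟩
    obtain ⟨x, y, c, hx, hy, hxy, h⟩ := T.exists_curvatureForm_apply_self_eq b n
    rw [LinearMap.neg_apply, LinearMap.neg_apply, h, neg_nonneg]
    exact mul_nonpos_of_nonneg_of_nonpos (sq_nonneg c) (hneg x y hx hy hxy)

variable {T} in
lemma SignedSec.curvatureForm_apply_eq_zero (hT : T.SignedSec) {n : E}
    (hn : T.curvatureForm b.toBasis n n = 0) (m : E) : T.curvatureForm b.toBasis n m = 0 := by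
  rcases hT.isPosSemidef_curvatureForm b with h | h
  · exact h.apply_eq_zero_of_apply_self_eq_zero hn m
  · simpa using h.apply_eq_zero_of_apply_self_eq_zero (by simpa using hn) m

lemma eq_zero_of_sec_eq_zero [FiniteDimensional ℝ E] (hdim : finrank ℝ E = 3)
    (hsec : ∀ x y : E, ‖x‖ = 1 → ‖y‖ = 1 → ⟪x, y⟫ = 0 → T.R x y y x = 0) : T.R = 0 := by
  let b : OrthonormalBasis (Fin 3) ℝ E := (stdOrthonormalBasis ℝ E).reindex (finCongr hdim)
  have halt : (T.curvatureForm b.toBasis).IsAlt := fun n => by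
    obtain ⟨x, y, c, hx, hy, hxy, h⟩ := T.exists_curvatureForm_apply_self_eq b n
    rw [h, hsec x y hx hy hxy, mul_zero]
  refine T.eq_zero_of_curvatureForm_eq_zero (b := b.toBasis) (LinearMap.ext₂ fun n m => ?_)
  rw [LinearMap.zero_apply, LinearMap.zero_apply]
  linarith [halt.neg_eq n m, (T.curvatureForm_isSymm b.toBasis).eq n m]

lemma curvatureForm_apply_self_eq_zero_of_flat {v : E} (hv : ‖v‖ = 1)
    (hflat : ∀ w : E, ⟪v, w⟫ = 0 → T.R w v v w = 0) {n : E} (hn : ⟪v, n⟫ = 0) :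
    T.curvatureForm b.toBasis n n = 0 := by
  obtain ⟨w, hw, rfl⟩ : ∃ w, ⟪v, w⟫ = 0 ∧ b.toBasis.cross v w = n := by
    refine ⟨_, b.inner_cross_self n v, ?_⟩
    rw [b.cross_cross_eq_smul_sub_smul, real_inner_self_eq_norm_sq, hv, hn, one_pow, one_smul,
      zero_smul, sub_zero]
  rw [← T.apply_eq_curvatureForm_cross, T.antisym_fst, T.antisym_snd, neg_neg, hflat w hw]

variable {T} in
lemma SignedSec.orthogonal_le_ker_curvatureForm (hT : T.SignedSec) {v : E} (hv : ‖v‖ = 1)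
    (hflat : ∀ w : E, ⟪v, w⟫ = 0 → T.R w v v w = 0) :
    (ℝ ∙ v)ᗮ ≤ LinearMap.ker (T.curvatureForm b.toBasis) := fun _ hn =>
  LinearMap.ext <| hT.curvatureForm_apply_eq_zero b <|
    T.curvatureForm_apply_self_eq_zero_of_flat b hv hflat <|
      Submodule.inner_right_of_mem_orthogonal (Submodule.mem_span_singleton_self v) hn

variable {T} in
lemma SignedSec.eq_zero_of_flat [FiniteDimensional ℝ E] (hdim : finrank ℝ E = 3)
    (hT : T.SignedSec) {v₁ v₂ : E} (hv₁ : ‖v₁‖ = 1) (hv₂ : ‖v₂‖ = 1)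
    (hli : LinearIndependent ℝ ![v₁, v₂]) (h₁ : ∀ w : E, ⟪v₁, w⟫ = 0 → T.R w v₁ v₁ w = 0)
    (h₂ : ∀ w : E, ⟪v₂, w⟫ = 0 → T.R w v₂ v₂ w = 0) : T.R = 0 := by
  let b : OrthonormalBasis (Fin 3) ℝ E := (stdOrthonormalBasis ℝ E).reindex (finCongr hdim)
  refine T.eq_zero_of_curvatureForm_eq_zero (b := b.toBasis)
    (LinearMap.ker_eq_top.mp (eq_top_iff.mpr ?_))
  rw [← hli.orthogonal_sup_orthogonal_eq_top]
  exact sup_le (hT.orthogonal_le_ker_curvatureForm b hv₁ h₁)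
    (hT.orthogonal_le_ker_curvatureForm b hv₂ h₂)

end AlgCurvTensor

theorem cvc0_isotropic_characterization_general {E : Type*} [NormedAddCommGroup E]
    [InnerProductSpace ℝ E] [FiniteDimensional ℝ E] (hdim : Module.finrank ℝ E = 3)
    (T : AlgCurvTensor E) (hsigned : T.SignedSec) :
    ((∀ x y : E, ‖x‖ = 1 → ‖y‖ = 1 → ⟪x, y⟫ = 0 → T.R x y y x = 0) ↔
      (∃ v₁ v₂ : E, ‖v₁‖ = 1 ∧ ‖v₂‖ = 1 ∧ LinearIndependent ℝ ![v₁, v₂] ∧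
        (∀ w : E, ⟪v₁, w⟫ = 0 → ∀ u : E, T.R w v₁ v₁ u = 0) ∧
        (∀ w : E, ⟪v₂, w⟫ = 0 → ∀ u : E, T.R w v₂ v₂ u = 0))) ∧
    ((∃ v₁ v₂ : E, ‖v₁‖ = 1 ∧ ‖v₂‖ = 1 ∧ LinearIndependent ℝ ![v₁, v₂] ∧
        (∀ w : E, ⟪v₁, w⟫ = 0 → ∀ u : E, T.R w v₁ v₁ u = 0) ∧
        (∀ w : E, ⟪v₂, w⟫ = 0 → ∀ u : E, T.R w v₂ v₂ u = 0)) ↔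
      (∀ v : E, ‖v‖ = 1 → ∀ w : E, ⟪v, w⟫ = 0 → ∀ u : E, T.R w v v u = 0)) := by
  let b : OrthonormalBasis (Fin 3) ℝ E := (stdOrthonormalBasis ℝ E).reindex (finCongr hdim)
  have hb : ∀ i, ‖b i‖ = 1 := b.orthonormal.1
  have hb01 : LinearIndependent ℝ ![b 0, b 1] := by
    have : ![b 0, b 1] = b ∘ ![0, 1] := by ext i; fin_cases i <;> rfl
    exact this ▸ b.orthonormal.linearIndependent.comp _ (by decide)
  refine ⟨⟨fun h => ?_, fun ⟨v₁, v₂, hv₁, hv₂, hli, h₁, h₂⟩ => ?_⟩,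
    ⟨fun ⟨v₁, v₂, hv₁, hv₂, hli, h₁, h₂⟩ => ?_, fun h => ?_⟩⟩
  · have hR := T.eq_zero_of_sec_eq_zero hdim h
    exact ⟨b 0, b 1, hb 0, hb 1, hb01, by simp [hR], by simp [hR]⟩
  · have hR := hsigned.eq_zero_of_flat hdim hv₁ hv₂ hli (fun w hw => h₁ w hw w)
      (fun w hw => h₂ w hw w)
    simp [hR]
  · have hR := hsigned.eq_zero_of_flat hdim hv₁ hv₂ hli (fun w hw => h₁ w hw w)
      (fun w hw => h₂ w hw w)
    simp [hR]
  · exact ⟨b 0, b 1, hb 0, hb 1, hb01, h _ (hb 0), h _ (hb 1)⟩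

/-- For an algebraic curvature tensor on a `3`-dimensional inner product space with signed
sectional curvatures and `cvc(0)`, the following are equivalent:
(i) all sectional curvatures vanish;
(ii) there are two linearly independent unit vectors `v₁, v₂` whose Jacobi operators vanish
identically on their orthogonal complements (`R(w,vᵢ)vᵢ = 0` for all `w ⟂ vᵢ`, expressed by
the vanishing of all inner products `⟨R(w,vᵢ)vᵢ, u⟩ = R w vᵢ vᵢ u`);
(iii) the Jacobi operator of every unit vector vanishes identically on its orthogonal
complement. -/
theorem cvc0_isotropic_characterization {E : Type*} [NormedAddCommGroup E]
    [InnerProductSpace ℝ E] [FiniteDimensional ℝ E] (hdim : Module.finrank ℝ E = 3)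
    (T : AlgCurvTensor E) (hsigned : T.SignedSec) (hcvc : T.CVC0) :
    ((∀ x y : E, ‖x‖ = 1 → ‖y‖ = 1 → ⟪x, y⟫ = 0 → T.R x y y x = 0) ↔
      (∃ v₁ v₂ : E, ‖v₁‖ = 1 ∧ ‖v₂‖ = 1 ∧ LinearIndependent ℝ ![v₁, v₂] ∧
        (∀ w : E, ⟪v₁, w⟫ = 0 → ∀ u : E, T.R w v₁ v₁ u = 0) ∧
        (∀ w : E, ⟪v₂, w⟫ = 0 → ∀ u : E, T.R w v₂ v₂ u = 0))) ∧
    ((∃ v₁ v₂ : E, ‖v₁‖ = 1 ∧ ‖v₂‖ = 1 ∧ LinearIndependent ℝ ![v₁, v₂] ∧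
        (∀ w : E, ⟪v₁, w⟫ = 0 → ∀ u : E, T.R w v₁ v₁ u = 0) ∧
        (∀ w : E, ⟪v₂, w⟫ = 0 → ∀ u : E, T.R w v₂ v₂ u = 0)) ↔
      (∀ v : E, ‖v‖ = 1 → ∀ w : E, ⟪v, w⟫ = 0 → ∀ u : E, T.R w v v u = 0)) :=
  cvc0_isotropic_characterization_general hdim T hsigned
end
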